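/- Let C₁ ⊆ C₂ be binary linear codes of length n. The set C₁ + 2C₂ := {c₁ + 2c₂ : c₁ ∈ C₁, c₂ ∈ C₂} (with entries computed in ℤ₄ via the natural embedding of 𝔽₂ into ℤ₄) is an additive subgroup of ℤ₄ⁿ if and only if the chain C₁ ⊆ C₂ is closed under the element-wise (Schur) product, i.e., for all c₁, c₁' ∈ C₁, the coordinatewise product c₁ ∘ c₁' belongs to C₂. -/
import Mathlib


/-- Natural embedding of `𝔽₂` into `ℤ₄`: `0 ↦ 0`, `1 ↦ 1`. -/
def phi (x : ZMod 2) : ZMod 4 := (x.val : ZMod 4)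

/-- The set `C₁ + 2C₂ ⊆ ℤ₄ⁿ` obtained from two binary codes. -/
def z4code {n : ℕ} (A B : Set (Fin n → ZMod 2)) : Set (Fin n → ZMod 4) :=
  {x | ∃ c₁ ∈ A, ∃ c₂ ∈ B, x = fun k => phi (c₁ k) + 2 * phi (c₂ k)}

lemma phi_add (a b : ZMod 2) : phi a + phi b = phi (a + b) + 2 * phi (a * b) := by
  revert a b; decide

lemma phi_inj (a b c d : ZMod 2) (h : phi a + 2 * phi b = phi c + 2 * phi d) :
    a = c ∧ b = d := by
  revert a b c d; decide

lemma phi_sum_sum (a b c d : ZMod 2) :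
    (phi a + 2 * phi b) + (phi c + 2 * phi d) =
      phi (a + c) + 2 * phi (a * c + b + d) := by
  revert a b c d; decide

lemma phi_neg (a b : ZMod 2) :
    -(phi a + 2 * phi b) = phi a + 2 * phi (a + b) := by
  revert a b; decide

theorem z4code_isAddSubgroup_iff_schur {n : ℕ}
    (C₁ C₂ : Submodule (ZMod 2) (Fin n → ZMod 2)) (h : C₁ ≤ C₂) :
    (∃ G : AddSubgroup (Fin n → ZMod 4),
        (G : Set (Fin n → ZMod 4)) = z4code (C₁ : Set (Fin n → ZMod 2)) (C₂ : Set (Fin n → ZMod 2))) ↔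
      (∀ c₁ ∈ C₁, ∀ c₁' ∈ C₁, (fun k => c₁ k * c₁' k) ∈ C₂) := by
  constructor
  · rintro ⟨G, hG⟩ c₁ hc₁ c₁' hc₁'
    have hx : (fun k => phi (c₁ k) + 2 * phi ((0 : Fin n → ZMod 2) k)) ∈ (G : Set (Fin n → ZMod 4)) := by
      rw [hG]; exact ⟨c₁, hc₁, 0, C₂.zero_mem, rfl⟩
    have hy : (fun k => phi (c₁' k) + 2 * phi ((0 : Fin n → ZMod 2) k)) ∈ (G : Set (Fin n → ZMod 4)) := by
      rw [hG]; exact ⟨c₁', hc₁', 0, C₂.zero_mem, rfl⟩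
    have hxy : ((fun k => phi (c₁ k) + 2 * phi ((0 : Fin n → ZMod 2) k)) +
        fun k => phi (c₁' k) + 2 * phi ((0 : Fin n → ZMod 2) k)) ∈ (G : Set (Fin n → ZMod 4)) :=
      G.add_mem hx hy
    rw [hG] at hxy
    obtain ⟨d₁, hd₁, d₂, hd₂, hd⟩ := hxy
    have key : ∀ k, c₁ k * c₁' k = d₂ k := by
      intro k
      have := congrFun hd k
      simp only [Pi.add_apply, Pi.zero_apply] at this
      rw [phi_sum_sum] at this
      have h2 := (phi_inj _ _ _ _ this).2
      simpa using h2
    have : (fun k => c₁ k * c₁' k) = d₂ := funext key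
    rw [this]; exact hd₂
  · intro hs
    refine ⟨{
      carrier := z4code (C₁ : Set (Fin n → ZMod 2)) (C₂ : Set (Fin n → ZMod 2))
      zero_mem' := ⟨0, C₁.zero_mem, 0, C₂.zero_mem, by
        funext k; simp [phi]⟩
      add_mem' := ?_
      neg_mem' := ?_ }, rfl⟩
    · rintro x y ⟨a, ha, b, hb, rfl⟩ ⟨c, hc, d, hd, rfl⟩
      refine ⟨a + c, C₁.add_mem ha hc, (fun k => a k * c k) + b + d,
        C₂.add_mem (C₂.add_mem (hs a ha c hc) hb) hd, ?_⟩
      funext k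
      simp only [Pi.add_apply]
      rw [phi_sum_sum]
    · rintro x ⟨a, ha, b, hb, rfl⟩
      refine ⟨a, ha, a + b, C₂.add_mem (h ha) hb, ?_⟩
      funext k
      simp only [Pi.neg_apply, Pi.add_apply]
      rw [phi_neg]
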